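/- arXiv:math/0403036 — 5 statements merged into one kernel-verified Lean document; each statement's English description precedes it below -/
import Mathlib

section
/- Let M be a 2×2 unitary matrix analytic in a real parameter λ on an open segment of the unit circle, with eigenvalues ρ₁, ρ₂, and let λ₀ be in the segment. Then M(λ₀) is a scalar multiple of the identity and the trace-free part of M'(λ₀) vanishes if and only if ρ₁(λ₀) = ρ₂(λ₀) and ρ₁'(λ₀) = ρ₂'(λ₀). -/
/-!
Write `disc A = (tr A)² - 4 det A`, so that `disc (M t) = (ρ₁ t - ρ₂ t)²` and
`4 (A - (tr A / 2) • 1)² = disc A • 1`. A normal matrix whose square vanishes is zero, so a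
normal `2 × 2` matrix is scalar exactly when its discriminant vanishes. If `M l₀ = c • 1`, then
`disc (M t) = disc (M t - M l₀)`, and dividing by `(t - l₀)²` and letting `t → l₀` gives
`disc (M' l₀) = (ρ₁' l₀ - ρ₂' l₀)²`. Both directions follow: `M l₀` is unitary, hence normal, and
differentiating `star M * M = 1` at a scalar point shows that `c̄ • M' l₀` is skew-Hermitian, so
`M' l₀` is normal too.
-/

open Matrix

/-- The entrywise derivative of a matrix-valued function of a real parameter. -/
noncomputable def matDeriv (M : ℝ → Matrix (Fin 2) (Fin 2) ℂ) (t : ℝ) :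
    Matrix (Fin 2) (Fin 2) ℂ :=
  Matrix.of fun i j => deriv (fun s => M s i j) t

open Filter Topology

namespace Matrix

section Field

variable {K : Type*} [Field K]

def traceDisc (A : Matrix (Fin 2) (Fin 2) K) : K := A.trace ^ 2 - 4 * A.det

def tracelessPart (A : Matrix (Fin 2) (Fin 2) K) : Matrix (Fin 2) (Fin 2) K :=
  A - (A.trace / 2) • 1

lemma traceDisc_smul (r : K) (A : Matrix (Fin 2) (Fin 2) K) :
    (r • A).traceDisc = r ^ 2 * A.traceDisc := by
  simp only [traceDisc, trace_smul, det_smul, Fintype.card_fin, smul_eq_mul]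
  ring

lemma traceDisc_sub_smul_one (A : Matrix (Fin 2) (Fin 2) K) (c : K) :
    (A - c • 1).traceDisc = A.traceDisc := by
  simp only [traceDisc, trace_fin_two, det_fin_two, sub_apply, smul_apply, one_apply_eq,
    one_apply_ne zero_ne_one, one_apply_ne one_ne_zero, smul_eq_mul]
  ring

lemma traceDisc_smul_one (c : K) : (c • (1 : Matrix (Fin 2) (Fin 2) K)).traceDisc = 0 := by
  rw [← traceDisc_sub_smul_one _ c, sub_self]
  simp [traceDisc]

lemma tracelessPart_mul_self [NeZero (2 : K)] (A : Matrix (Fin 2) (Fin 2) K) :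
    (4 : K) • (A.tracelessPart * A.tracelessPart) = A.traceDisc • 1 := by
  ext i j
  fin_cases i <;> fin_cases j <;>
    simp [tracelessPart, traceDisc, trace_fin_two, det_fin_two, mul_apply, Fin.sum_univ_two,
      one_apply, -mul_eq_zero] <;>
    field_simp <;> ring

lemma continuous_traceDisc [TopologicalSpace K] [IsTopologicalRing K] :
    Continuous (traceDisc : Matrix (Fin 2) (Fin 2) K → K) :=
  (continuous_id.matrix_trace.pow 2).sub (continuous_const.mul continuous_id.matrix_det)

lemma traceDisc_eq_sq_sub_of_charpoly_roots [IsAlgClosed K] {A : Matrix (Fin 2) (Fin 2) K}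
    {a b : K} (h : A.charpoly.roots = {a, b}) : A.traceDisc = (a - b) ^ 2 := by
  rw [traceDisc, trace_eq_sum_roots_charpoly, det_eq_prod_roots_charpoly, h]
  simp only [Multiset.insert_eq_cons, Multiset.sum_cons, Multiset.sum_singleton,
    Multiset.prod_cons, Multiset.prod_singleton]
  ring

lemma traceDisc_eq_zero_of_tracelessPart_eq_zero [NeZero (2 : K)] {A : Matrix (Fin 2) (Fin 2) K}
    (h : A.tracelessPart = 0) : A.traceDisc = 0 := by
  simpa [h] using (congrFun (congrFun A.tracelessPart_mul_self 0) 0).symm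

end Field

lemma eq_zero_of_isStarNormal_of_mul_self_eq_zero {n R : Type*} [Fintype n] [PartialOrder R]
    [CommRing R] [StarRing R] [StarOrderedRing R] [NoZeroDivisors R] {A : Matrix n n R}
    [hA : IsStarNormal A] (h : A * A = 0) : A = 0 := by
  have hAA : (Aᴴ * A)ᴴ * (Aᴴ * A) = 0 := by
    rw [conjTranspose_mul, conjTranspose_conjTranspose, mul_assoc, ← mul_assoc A,
      ← star_eq_conjTranspose, ← hA.star_comm_self.eq, mul_assoc, h]
    simp
  exact conjTranspose_mul_self_eq_zero.1 (conjTranspose_mul_self_eq_zero.1 hAA)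

open scoped ComplexOrder in
lemma tracelessPart_eq_zero_of_isStarNormal {𝕜 : Type*} [RCLike 𝕜] {A : Matrix (Fin 2) (Fin 2) 𝕜}
    [hA : IsStarNormal A] (h : A.traceDisc = 0) : A.tracelessPart = 0 := by
  have : IsStarNormal A.tracelessPart := by
    refine ⟨?_⟩
    simp only [tracelessPart, star_sub, star_smul, star_one]
    exact ((hA.star_comm_self.sub_right ((Commute.one_right _).smul_right _)).sub_left
      (((Commute.one_left _).smul_left _).sub_right ((Commute.one_right _).smul_right _)))
  apply eq_zero_of_isStarNormal_of_mul_self_eq_zero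
  have := A.tracelessPart_mul_self
  rwa [h, zero_smul, smul_eq_zero_iff_right four_ne_zero] at this

end Matrix

lemma isStarNormal_of_smul_star_add_star_smul_eq_zero {K A : Type*} [Field K] [StarRing K]
    [Ring A] [StarRing A] [Algebra K A] {c : K} {D : A} (hc : c ≠ 0)
    (h : c • star D + star c • D = 0) : IsStarNormal D := by
  have hD : star D = -(c⁻¹ * star c) • D := by
    rw [neg_smul, mul_smul, ← smul_neg, ← eq_neg_of_add_eq_zero_left h, inv_smul_smul₀ hc]
  exact ⟨hD ▸ (Commute.refl D).smul_left _⟩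

lemma tendsto_slope_matDeriv {M : ℝ → Matrix (Fin 2) (Fin 2) ℂ} {x : ℝ}
    (hM : ∀ i j, DifferentiableAt ℝ (fun s => M s i j) x) :
    Tendsto (slope M x) (𝓝[≠] x) (𝓝 (matDeriv M x)) :=
  tendsto_pi_nhds.2 fun i => tendsto_pi_nhds.2 fun j =>
    (hasDerivAt_iff_tendsto_slope.1 (hM i j).hasDerivAt).congr fun t => by
      simp [slope_def_module]

lemma traceDisc_matDeriv_eq_sq_deriv {M : ℝ → Matrix (Fin 2) (Fin 2) ℂ} {u : ℝ → ℂ} {x : ℝ}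
    {c : ℂ} (hM : ∀ i j, DifferentiableAt ℝ (fun s => M s i j) x)
    (hu : DifferentiableAt ℝ u x) (hx : M x = c • 1)
    (h : ∀ᶠ t in 𝓝 x, (M t).traceDisc = u t ^ 2) :
    (matDeriv M x).traceDisc = deriv u x ^ 2 := by
  have hu0 : u x = 0 := by
    have := h.self_of_nhds
    rw [hx, traceDisc_smul_one] at this
    exact pow_eq_zero_iff two_ne_zero |>.1 this.symm
  have hL := (continuous_traceDisc.tendsto _).comp (tendsto_slope_matDeriv hM)
  have hR := (hasDerivAt_iff_tendsto_slope.1 hu.hasDerivAt).pow 2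
  refine tendsto_nhds_unique (hL.congr' ?_) hR
  filter_upwards [nhdsWithin_le_nhds h] with t ht
  rw [Function.comp_apply, slope_def_module, slope_def_module, hx, hu0, sub_zero,
    ← algebraMap_smul ℂ, traceDisc_smul, traceDisc_sub_smul_one, ht, Complex.real_smul]
  simp only [Complex.coe_algebraMap]
  ring

lemma star_matDeriv_mul_add_star_mul_matDeriv {M : ℝ → Matrix (Fin 2) (Fin 2) ℂ} {x : ℝ}
    (hM : ∀ i j, DifferentiableAt ℝ (fun s => M s i j) x)
    (h : ∀ᶠ t in 𝓝 x, star (M t) * M t = 1) :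
    star (matDeriv M x) * M x + star (M x) * matDeriv M x = 0 := by
  ext i j
  have H k l := (hM k l).hasDerivAt
  have hf : HasDerivAt (fun t => (star (M t) * M t) i j)
      ((star (matDeriv M x) * M x + star (M x) * matDeriv M x) i j) x := by
    simp only [mul_apply, Fin.sum_univ_two, star_apply, Matrix.add_apply, matDeriv, of_apply]
    exact ((H 0 i).star.fun_mul (H 0 j)).fun_add ((H 1 i).star.fun_mul (H 1 j)) |>.congr_deriv
      (by ring)
  exact hf.unique <| (hasDerivAt_const x ((1 : Matrix (Fin 2) (Fin 2) ℂ) i j)).congr_of_eventuallyEq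
    (h.mono fun t ht => congrFun (congrFun ht i) j)

lemma isStarNormal_matDeriv_of_mem_unitaryGroup {M : ℝ → Matrix (Fin 2) (Fin 2) ℂ} {x : ℝ}
    {c : ℂ} (hM : ∀ i j, DifferentiableAt ℝ (fun s => M s i j) x)
    (hU : ∀ᶠ t in 𝓝 x, M t ∈ unitaryGroup (Fin 2) ℂ) (hx : M x = c • 1) :
    IsStarNormal (matDeriv M x) := by
  have hc : c ≠ 0 := by
    rintro rfl
    simpa [hx] using Unitary.star_mul_self_of_mem hU.self_of_nhds
  have hD := star_matDeriv_mul_add_star_mul_matDeriv hM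
    (hU.mono fun t ht => Unitary.star_mul_self_of_mem ht)
  rw [hx, Matrix.mul_smul, mul_one, star_smul, star_one, Matrix.smul_mul, one_mul] at hD
  exact isStarNormal_of_smul_star_add_star_smul_eq_zero hc hD

/-- For an analytic family of 2×2 unitary matrices `M` on an open
segment `γ` of the circle parameter with analytic eigenvalue branches `ρ₁, ρ₂`,
and `l₀ ∈ γ`: `M l₀` is a scalar multiple of the identity and the trace-free
part of `M' l₀` vanishes iff `ρ₁ l₀ = ρ₂ l₀` and `ρ₁' l₀ = ρ₂' l₀`. -/
theorem stmt0 (γ : Set ℝ) (hγ : IsOpen γ)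
    (M : ℝ → Matrix (Fin 2) (Fin 2) ℂ) (ρ₁ ρ₂ : ℝ → ℂ) (l₀ : ℝ) (hl₀ : l₀ ∈ γ)
    (hM : ∀ t ∈ γ, ∀ i j, AnalyticAt ℝ (fun s => M s i j) t)
    (hρ₁ : ∀ t ∈ γ, AnalyticAt ℝ ρ₁ t) (hρ₂ : ∀ t ∈ γ, AnalyticAt ℝ ρ₂ t)
    (hU : ∀ t ∈ γ, M t ∈ Matrix.unitaryGroup (Fin 2) ℂ)
    (heig : ∀ t ∈ γ, (M t).charpoly.roots = {ρ₁ t, ρ₂ t}) :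
    ((∃ c : ℂ, M l₀ = c • (1 : Matrix (Fin 2) (Fin 2) ℂ)) ∧
        matDeriv M l₀ - ((Matrix.trace (matDeriv M l₀)) / 2) •
          (1 : Matrix (Fin 2) (Fin 2) ℂ) = 0) ↔
      (ρ₁ l₀ = ρ₂ l₀ ∧ deriv ρ₁ l₀ = deriv ρ₂ l₀) := by
  have hγl₀ : γ ∈ 𝓝 l₀ := hγ.mem_nhds hl₀
  have hMd i j : DifferentiableAt ℝ (fun s => M s i j) l₀ := (hM l₀ hl₀ i j).differentiableAt
  have hd₁ := (hρ₁ l₀ hl₀).differentiableAt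
  have hd₂ := (hρ₂ l₀ hl₀).differentiableAt
  have hdisc : ∀ᶠ t in 𝓝 l₀, (M t).traceDisc = (ρ₁ t - ρ₂ t) ^ 2 :=
    eventually_of_mem hγl₀ fun t ht => traceDisc_eq_sq_sub_of_charpoly_roots (heig t ht)
  have hdisc' {c : ℂ} (hc : M l₀ = c • 1) :
      (matDeriv M l₀).traceDisc = (deriv ρ₁ l₀ - deriv ρ₂ l₀) ^ 2 := by
    rw [traceDisc_matDeriv_eq_sq_deriv hMd (hd₁.sub hd₂) hc hdisc, deriv_sub hd₁ hd₂]
  change (_ ∧ (matDeriv M l₀).tracelessPart = 0) ↔ _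
  constructor
  · rintro ⟨⟨c, hc⟩, hT⟩
    have h0 := hdisc.self_of_nhds
    rw [hc, traceDisc_smul_one, eq_comm, sq_eq_zero_iff, sub_eq_zero] at h0
    have h1 := hdisc' hc
    rw [traceDisc_eq_zero_of_tracelessPart_eq_zero hT, eq_comm, sq_eq_zero_iff, sub_eq_zero] at h1
    exact ⟨h0, h1⟩
  · rintro ⟨h0, h1⟩
    have : IsStarNormal (M l₀) := isStarNormal_of_mem_unitary (hU l₀ hl₀)
    have hc : M l₀ = ((M l₀).trace / 2) • 1 := sub_eq_zero.1 <|
      tracelessPart_eq_zero_of_isStarNormal (by rw [hdisc.self_of_nhds, h0, sub_self, sq, zero_mul])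
    have := isStarNormal_matDeriv_of_mem_unitaryGroup hMd (eventually_of_mem hγl₀ hU) hc
    refine ⟨⟨_, hc⟩, tracelessPart_eq_zero_of_isStarNormal ?_⟩
    rw [hdisc' hc, h1, sub_self, sq, zero_mul]
end

section
/- If M: γ → SU(2) is analytic in λ on an open segment γ of the circle with eigenvalue ρ₁, and λ₀ ∈ γ, then M(λ₀) = ±I and M'(λ₀) = 0 if and only if ρ₁(λ₀) = ±1 and ρ₁'(λ₀) = 0. -/
/-!
An eigenvalue `ρ` of `U ∈ SU(2)` has `|ρ| = 1` and `tr U = 2 Re ρ`; together with the unit rows of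
`U` this gives, for every real `r`, the Frobenius-norm identity `‖U - r I‖ = √2 |ρ - r|`.
Along the curve, once `M(l₀) = ±I` or `ρ₁(l₀) = ±1` (each forces the other), this reads
`‖M(t) - M(l₀)‖ = √2 |ρ₁(t) - ρ₁(l₀)|` near `l₀`. Dividing by `|t - l₀|` and letting `t → l₀`
gives `‖M'(l₀)‖ = √2 |ρ₁'(l₀)|`, so the two derivatives vanish together.
-/

open Matrix

open Filter Topology

theorem HasDerivAt.norm_eq_mul_of_norm_sub_eq {E F : Type*} [NormedAddCommGroup E]
    [NormedSpace ℝ E] [NormedAddCommGroup F] [NormedSpace ℝ F] {f : ℝ → E} {g : ℝ → F}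
    {f' : E} {g' : F} {x c : ℝ} (hf : HasDerivAt f f' x) (hg : HasDerivAt g g' x)
    (h : ∀ᶠ t in 𝓝 x, ‖f t - f x‖ = c * ‖g t - g x‖) : ‖f'‖ = c * ‖g'‖ := by
  refine tendsto_nhds_unique (hasDerivAt_iff_tendsto_slope.1 hf).norm
    (((hasDerivAt_iff_tendsto_slope.1 hg).norm.const_mul c).congr' ?_)
  filter_upwards [nhdsWithin_le_nhds h] with t ht
  rw [slope_def_module, slope_def_module, norm_smul, norm_smul, ht]
  ring

theorem HasDerivAt.eq_and_eq_zero_iff_of_norm_sub_eq {E F : Type*} [NormedAddCommGroup E]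
    [NormedSpace ℝ E] [NormedAddCommGroup F] [NormedSpace ℝ F] {f : ℝ → E} {g : ℝ → F}
    {f' : E} {g' : F} {a : E} {b : F} {x c : ℝ} (hc : 0 < c)
    (hf : HasDerivAt f f' x) (hg : HasDerivAt g g' x)
    (h : ∀ᶠ t in 𝓝 x, ‖f t - a‖ = c * ‖g t - b‖) :
    (f x = a ∧ f' = 0) ↔ (g x = b ∧ g' = 0) := by
  have hx : f x = a ↔ g x = b := by
    rw [← sub_eq_zero, ← norm_eq_zero, h.self_of_nhds, mul_eq_zero, or_iff_right hc.ne',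
      norm_eq_zero, sub_eq_zero]
  suffices hderiv : g x = b → (f' = 0 ↔ g' = 0) by tauto
  intro hgx
  have hfg := hf.norm_eq_mul_of_norm_sub_eq hg (by rwa [hx.2 hgx, hgx])
  rw [← norm_eq_zero, hfg, mul_eq_zero, or_iff_right hc.ne', norm_eq_zero]

namespace Matrix

theorem norm_eq_one_of_isRoot_charpoly {n : Type*} [Fintype n] [DecidableEq n]
    {U : Matrix n n ℂ} (hU : U ∈ unitaryGroup n ℂ) {ρ : ℂ} (hρ : U.charpoly.IsRoot ρ) :
    ‖ρ‖ = 1 := by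
  open scoped Matrix.Norms.L2Operator in
  exact spectrum.norm_eq_one_of_unitary hU (mem_spectrum_iff_isRoot_charpoly.2 hρ)

theorem trace_eq_two_mul_re_of_isRoot_charpoly {U : Matrix (Fin 2) (Fin 2) ℂ}
    (hU : U ∈ specialUnitaryGroup (Fin 2) ℂ) {ρ : ℂ} (hρ : U.charpoly.IsRoot ρ) :
    U.trace = ((2 * ρ.re : ℝ) : ℂ) := by
  obtain ⟨hU, hdet⟩ := mem_specialUnitaryGroup_iff.1 hU
  have hquad : ρ ^ 2 - U.trace * ρ + 1 = 0 := by
    simpa [charpoly_fin_two, hdet] using hρ.eq_zero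
  have hnorm : ρ * (starRingEnd ℂ) ρ = 1 := by
    rw [Complex.mul_conj, Complex.normSq_eq_norm_sq, norm_eq_one_of_isRoot_charpoly hU hρ,
      one_pow, Complex.ofReal_one]
  have hsum : ρ + (starRingEnd ℂ) ρ = U.trace := by
    linear_combination (starRingEnd ℂ) ρ * hquad - (ρ - U.trace) * hnorm
  rw [← hsum, Complex.add_conj]

theorem hasDerivAt_matDeriv {M : ℝ → Matrix (Fin 2) (Fin 2) ℂ} {x : ℝ}
    (hM : ∀ i j, DifferentiableAt ℝ (fun t => M t i j) x) : HasDerivAt M (matDeriv M x) x :=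
  hasDerivAt_pi.2 fun i => hasDerivAt_pi.2 fun j => (hM i j).hasDerivAt

section Frobenius

attribute [local instance] frobeniusNormedAddCommGroup frobeniusNormedSpace

theorem frobenius_norm_sq_fin_two {α : Type*} [NormedAddCommGroup α]
    (A : Matrix (Fin 2) (Fin 2) α) :
    ‖A‖ ^ 2 = ‖A 0 0‖ ^ 2 + ‖A 0 1‖ ^ 2 + (‖A 1 0‖ ^ 2 + ‖A 1 1‖ ^ 2) := by
  rw [frobenius_norm_def, ← Real.sqrt_eq_rpow, Real.sq_sqrt (by positivity)]
  simp [Fin.sum_univ_two]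

theorem frobenius_norm_sub_smul_one_of_isRoot_charpoly {U : Matrix (Fin 2) (Fin 2) ℂ}
    (hU : U ∈ specialUnitaryGroup (Fin 2) ℂ) {ρ : ℂ} (hρ : U.charpoly.IsRoot ρ) (r : ℝ) :
    ‖U - (r : ℂ) • 1‖ = √2 * ‖ρ - r‖ := by
  have hunit := (mem_specialUnitaryGroup_iff.1 hU).1
  have hrow (i : Fin 2) : Complex.normSq (U i 0) + Complex.normSq (U i 1) = 1 := by
    have := congrFun (congrFun (mem_unitaryGroup_iff.1 hunit) i) i
    simp only [mul_apply, Fin.sum_univ_two, star_apply, RCLike.star_def, Complex.mul_conj,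
      one_apply_eq] at this
    exact_mod_cast this
  have hρ1 : Complex.normSq ρ = 1 := by
    rw [Complex.normSq_eq_norm_sq, norm_eq_one_of_isRoot_charpoly hunit hρ, one_pow]
  have htr := congrArg Complex.re (trace_eq_two_mul_re_of_isRoot_charpoly hU hρ)
  simp only [trace_fin_two, Complex.add_re, Complex.ofReal_re] at htr
  have hsq : ‖U - (r : ℂ) • 1‖ ^ 2 = 2 * ‖ρ - r‖ ^ 2 := by
    simp only [frobenius_norm_sq_fin_two, Complex.sq_norm, sub_apply, smul_apply, one_apply_eq,
      one_apply_ne zero_ne_one, one_apply_ne one_ne_zero, smul_eq_mul, mul_one, mul_zero,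
      sub_zero, Complex.normSq_sub, Complex.normSq_ofReal, Complex.conj_ofReal,
      Complex.re_mul_ofReal]
    linear_combination hrow 0 + hrow 1 - 2 * r * htr - 2 * hρ1
  rw [← Real.sqrt_sq (norm_nonneg _), hsq, Real.sqrt_mul zero_le_two, Real.sqrt_sq (norm_nonneg _)]

theorem eq_smul_one_and_matDeriv_eq_zero_iff {M : ℝ → Matrix (Fin 2) (Fin 2) ℂ} {ρ : ℝ → ℂ}
    {x : ℝ} (hM : ∀ i j, DifferentiableAt ℝ (fun t => M t i j) x)
    (hρ : DifferentiableAt ℝ ρ x)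
    (hSU : ∀ᶠ t in 𝓝 x, M t ∈ specialUnitaryGroup (Fin 2) ℂ ∧ (M t).charpoly.IsRoot (ρ t))
    (r : ℝ) :
    (M x = (r : ℂ) • 1 ∧ matDeriv M x = 0) ↔ (ρ x = r ∧ deriv ρ x = 0) :=
  (hasDerivAt_matDeriv hM).eq_and_eq_zero_iff_of_norm_sub_eq (Real.sqrt_pos.2 two_pos)
    hρ.hasDerivAt (hSU.mono fun _ ht => frobenius_norm_sub_smul_one_of_isRoot_charpoly ht.1 ht.2 r)

end Frobenius

end Matrix

/-- For an analytic family of matrices in SU(2) on an open segment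
`γ` with analytic eigenvalue branch `ρ₁` and `l₀ ∈ γ`: `M l₀ = ±I` and
`M' l₀ = 0` iff `ρ₁ l₀ = ±1` and `ρ₁' l₀ = 0`. -/
theorem stmt1 (γ : Set ℝ) (hγ : IsOpen γ)
    (M : ℝ → Matrix (Fin 2) (Fin 2) ℂ) (ρ₁ : ℝ → ℂ) (l₀ : ℝ) (hl₀ : l₀ ∈ γ)
    (hM : ∀ t ∈ γ, ∀ i j, AnalyticAt ℝ (fun s => M s i j) t)
    (hρ₁ : ∀ t ∈ γ, AnalyticAt ℝ ρ₁ t)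
    (hU : ∀ t ∈ γ, M t ∈ Matrix.specialUnitaryGroup (Fin 2) ℂ)
    (heig : ∀ t ∈ γ, (M t).charpoly.IsRoot (ρ₁ t)) :
    ((M l₀ = 1 ∨ M l₀ = -1) ∧ matDeriv M l₀ = 0) ↔
      ((ρ₁ l₀ = 1 ∨ ρ₁ l₀ = -1) ∧ deriv ρ₁ l₀ = 0) := by
  have key := eq_smul_one_and_matDeriv_eq_zero_iff (fun i j => (hM l₀ hl₀ i j).differentiableAt)
    (hρ₁ l₀ hl₀).differentiableAt
    (eventually_of_mem (hγ.mem_nhds hl₀) fun t ht => ⟨hU t ht, heig t ht⟩)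
  have hplus := key 1
  have hminus := key (-1)
  simp only [Complex.ofReal_one, Complex.ofReal_neg, one_smul, neg_smul] at hplus hminus
  tauto
end

section
/- Let U₁, U₂ ∈ U(2) with U₁U₂ ≠ U₂U₁, and let A ∈ GL(2,ℂ) satisfy AU₁A⁻¹ ∈ U(2) and AU₂A⁻¹ ∈ U(2). Then A = rU for some positive real r and U ∈ U(2). -/
/-!
If `A U A⁻¹` is unitary for a unitary `U`, then `Aᴴ A` commutes with `U`. For `2 × 2` matrices,
`P` and `X` commute exactly when the vectors `(P₀₁, P₁₀, P₀₀ - P₁₁)` and `(X₀₁, X₁₀, X₀₀ - X₁₁)`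
have zero cross product, so a matrix commuting with two non-commuting matrices has zero such
vector, i.e. is scalar. Hence `Aᴴ A = c • 1`, where `c > 0` as `Aᴴ A` is positive semidefinite
and nonzero, and `A / √c` is unitary.
-/

open Matrix
open scoped ComplexOrder

theorem commute_star_mul_self_of_mul_mul_mem_unitary {R : Type*} [Monoid R] [StarMul R]
    {A B U : R} (hBA : B * A = 1) (hU : U ∈ unitary R) (h : A * U * B ∈ unitary R) :
    Commute (star A * A) U := by
  have hconj : star U * (star A * A) * U = star A * A := calc
    star U * (star A * A) * U = star (B * A) * (star U * (star A * A) * U) * (B * A) := by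
      rw [hBA, star_one, one_mul, mul_one]
    _ = star A * (star (A * U * B) * (A * U * B)) * A := by simp only [star_mul, mul_assoc]
    _ = star A * A := by rw [Unitary.star_mul_self_of_mem h, mul_one]
  calc star A * A * U = U * star U * (star A * A) * U := by
        rw [Unitary.mul_star_self_of_mem hU, one_mul]
    _ = U * (star A * A) := by simp only [mul_assoc] at hconj ⊢; rw [hconj]

theorem cross_eq_zero_of_cross_eq_zero {F : Type*} [Field F] {u v w : Fin 3 → F} (hu : u ≠ 0)
    (hv : u ⨯₃ v = 0) (hw : u ⨯₃ w = 0) : v ⨯₃ w = 0 := by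
  have parallel : ∀ {x}, u ⨯₃ x = 0 → ∃ a : F, a • u = x := fun hx ↦ by
    simpa [LinearIndependent.pair_iff' hu] using
      mt crossProduct_ne_zero_iff_linearIndependent.mpr (not_not.mpr hx)
  obtain ⟨a, rfl⟩ := parallel hv
  obtain ⟨b, rfl⟩ := parallel hw
  simp [cross_self]

def tracelessCoords {R : Type*} [Ring R] (P : Matrix (Fin 2) (Fin 2) R) : Fin 3 → R :=
  ![P 0 1, P 1 0, P 0 0 - P 1 1]

theorem commute_iff_cross_tracelessCoords_eq_zero {R : Type*} [CommRing R]
    {P X : Matrix (Fin 2) (Fin 2) R} :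
    Commute P X ↔ tracelessCoords P ⨯₃ tracelessCoords X = 0 := by
  simp only [commute_iff_eq, ← ext_iff, mul_apply, Fin.sum_univ_two, Fin.forall_fin_two,
    tracelessCoords, cross_apply, cons_val_one, cons_val_zero, cons_val, cons_eq_zero_iff,
    zero_empty, and_true]
  constructor
  · rintro ⟨⟨h00, h01⟩, h10, -⟩
    exact ⟨by linear_combination h10, by linear_combination h01, by linear_combination h00⟩
  · rintro ⟨h0, h1, h2⟩
    exact ⟨⟨by linear_combination h2, by linear_combination h1⟩, by linear_combination h0,
      by linear_combination -h2⟩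

theorem eq_smul_one_of_tracelessCoords_eq_zero {R : Type*} [Ring R]
    {P : Matrix (Fin 2) (Fin 2) R} (h : tracelessCoords P = 0) : P = P 0 0 • 1 := by
  simp only [tracelessCoords, cons_eq_zero_iff, zero_empty, and_true] at h
  ext i j
  fin_cases i <;> fin_cases j <;> simp [h, sub_eq_zero.mp h.2.2]

theorem exists_eq_smul_one_of_commute_of_not_commute {K : Type*} [Field K]
    {P X Y : Matrix (Fin 2) (Fin 2) K} (hX : Commute P X) (hY : Commute P Y)
    (hXY : ¬Commute X Y) : ∃ c : K, P = c • 1 := by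
  rw [commute_iff_cross_tracelessCoords_eq_zero] at hX hY hXY
  refine ⟨P 0 0, eq_smul_one_of_tracelessCoords_eq_zero ?_⟩
  by_contra hP
  exact hXY (cross_eq_zero_of_cross_eq_zero hP hX hY)

theorem exists_pos_smul_unitary_of_conjTranspose_mul_self_eq_smul_one {𝕜 n : Type*} [RCLike 𝕜]
    [Fintype n] [DecidableEq n] [Nonempty n] {A : Matrix n n 𝕜} (hA : A ≠ 0) {c : 𝕜}
    (h : Aᴴ * A = c • 1) :
    ∃ (r : ℝ) (U : Matrix n n 𝕜), 0 < r ∧ U ∈ unitaryGroup n 𝕜 ∧ A = (r : 𝕜) • U := by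
  have hc_nonneg : 0 ≤ c := by
    simpa [h] using (posSemidef_conjTranspose_mul_self A).diag_nonneg (i := Classical.arbitrary n)
  have hc_ne : c ≠ 0 := by
    rintro rfl
    exact hA (conjTranspose_mul_self_eq_zero.mp (by simpa using h))
  obtain ⟨s, hs, rfl⟩ := RCLike.pos_iff_exists_ofReal.mp (hc_nonneg.lt_of_ne hc_ne.symm)
  have hr : ((√s : ℝ) : 𝕜) ≠ 0 := by simpa using (Real.sqrt_pos.2 hs).ne'
  refine ⟨√s, ((√s : ℝ) : 𝕜)⁻¹ • A, Real.sqrt_pos.2 hs, ?_,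
    by rw [smul_smul, mul_inv_cancel₀ hr, one_smul]⟩
  have hs' : (√s)⁻¹ * (√s)⁻¹ * s = 1 := by
    rw [← mul_inv, Real.mul_self_sqrt hs.le, inv_mul_cancel₀ hs.ne']
  rw [mem_unitaryGroup_iff', star_smul, smul_mul_smul_comm, star_eq_conjTranspose, h, smul_smul,
    ← RCLike.ofReal_inv, RCLike.star_def, RCLike.conj_ofReal, ← RCLike.ofReal_mul,
    ← RCLike.ofReal_mul, hs', RCLike.ofReal_one, one_smul]

/-- If `U₁, U₂ ∈ U(2)` do not commute and `A ∈ GL(2,ℂ)` conjugates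
both into `U(2)`, then `A = r • U` for some positive real `r` and unitary `U`. -/
theorem stmt3 (U₁ U₂ A : Matrix (Fin 2) (Fin 2) ℂ)
    (hU₁ : U₁ ∈ Matrix.unitaryGroup (Fin 2) ℂ)
    (hU₂ : U₂ ∈ Matrix.unitaryGroup (Fin 2) ℂ)
    (hnc : U₁ * U₂ ≠ U₂ * U₁)
    (hA : IsUnit A.det)
    (h₁ : A * U₁ * A⁻¹ ∈ Matrix.unitaryGroup (Fin 2) ℂ)
    (h₂ : A * U₂ * A⁻¹ ∈ Matrix.unitaryGroup (Fin 2) ℂ) :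
    ∃ (r : ℝ) (U : Matrix (Fin 2) (Fin 2) ℂ), 0 < r ∧
      U ∈ Matrix.unitaryGroup (Fin 2) ℂ ∧ A = (r : ℂ) • U := by
  have hc₁ := commute_star_mul_self_of_mul_mul_mem_unitary (nonsing_inv_mul A hA) hU₁ h₁
  have hc₂ := commute_star_mul_self_of_mul_mul_mem_unitary (nonsing_inv_mul A hA) hU₂ h₂
  obtain ⟨c, hc⟩ := exists_eq_smul_one_of_commute_of_not_commute hc₁ hc₂ (fun h ↦ hnc h.eq)
  have hA₀ : A ≠ 0 := by
    rintro rfl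
    simp at hA
  exact exists_pos_smul_unitary_of_conjTranspose_mul_self_eq_smul_one hA₀ hc
end

section
/- Let M₁,…,Mₙ ∈ GL(2,ℂ) (n ≥ 2) be simultaneously unitarizable (there is C ∈ GL(2,ℂ) with CMⱼC⁻¹ ∈ U(2) for all j) and nondegenerate (MᵢMⱼ ≠ MⱼMᵢ for some pair i ≠ j). Then the kernel of the linear map L: M₂ₓ₂(ℂ) → (M₂ₓ₂(ℂ))ⁿ given by L(X) = (XM₁ − (M₁*)⁻¹X, …, XMₙ − (Mₙ*)⁻¹X) has complex dimension 1. -/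
open Matrix

lemma comm2 (A B Y : Matrix (Fin 2) (Fin 2) ℂ) (hA : Y*A = A*Y) (hB : Y*B = B*Y)
    (hAB : A*B ≠ B*A) : ∃ c : ℂ, Y = c • 1 := by
  have eA := fun i j => congrFun (congrFun hA i) j
  have eB := fun i j => congrFun (congrFun hB i) j
  simp only [Matrix.mul_apply, Fin.sum_univ_two] at eA eB
  have eA00 := eA 0 0; have eA01 := eA 0 1; have eA10 := eA 1 0
  have eB00 := eB 0 0; have eB01 := eB 0 1; have eB10 := eB 1 0
  by_cases had : Y 0 0 = Y 1 1
  · by_cases hb : Y 0 1 = 0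
    · by_cases hc : Y 1 0 = 0
      · exact ⟨Y 0 0, by ext i j; fin_cases i <;> fin_cases j <;>
          simp [Matrix.one_apply, hb, hc, had.symm]⟩
      · -- a = d, b = 0, c ≠ 0
        exfalso; apply hAB
        have hpA : A 1 1 = A 0 0 := by
          have h : Y 1 0 * (A 0 0 - A 1 1) = 0 := by
            linear_combination eA10 + A 1 0 * had
          rcases mul_eq_zero.1 h with h | h
          · exact absurd h hc
          · linear_combination -h
        have hpB : B 1 1 = B 0 0 := by
          have h : Y 1 0 * (B 0 0 - B 1 1) = 0 := by
            linear_combination eB10 + B 1 0 * had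
          rcases mul_eq_zero.1 h with h | h
          · exact absurd h hc
          · linear_combination -h
        have hqA : A 0 1 = 0 := by
          have h : A 0 1 * Y 1 0 = 0 := by linear_combination -eA00 + A 1 0 * hb
          exact (mul_eq_zero.1 h).resolve_right hc
        have hqB : B 0 1 = 0 := by
          have h : B 0 1 * Y 1 0 = 0 := by linear_combination -eB00 + B 1 0 * hb
          exact (mul_eq_zero.1 h).resolve_right hc
        ext i j; fin_cases i <;> fin_cases j <;>
          simp only [Matrix.mul_apply, Fin.sum_univ_two, Fin.mk_zero, Fin.mk_one, hpA, hpB, hqA, hqB] <;> ring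
    · -- a = d, b ≠ 0
      exfalso; apply hAB
      have hpA : A 1 1 = A 0 0 := by
        have h : Y 0 1 * (A 0 0 - A 1 1) = 0 := by
          linear_combination -eA01 + A 0 1 * had
        rcases mul_eq_zero.1 h with h | h
        · exact absurd h hb
        · linear_combination -h
      have hpB : B 1 1 = B 0 0 := by
        have h : Y 0 1 * (B 0 0 - B 1 1) = 0 := by
          linear_combination -eB01 + B 0 1 * had
        rcases mul_eq_zero.1 h with h | h
        · exact absurd h hb
        · linear_combination -h
      have hrA : A 1 0 = A 0 1 * Y 1 0 / Y 0 1 := by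
        rw [eq_div_iff hb]; linear_combination eA00
      have hrB : B 1 0 = B 0 1 * Y 1 0 / Y 0 1 := by
        rw [eq_div_iff hb]; linear_combination eB00
      ext i j; fin_cases i <;> fin_cases j <;>
        simp only [Matrix.mul_apply, Fin.sum_univ_two, Fin.mk_zero, Fin.mk_one, hpA, hpB, hrA, hrB] <;>
        (first | (field_simp; ring) | field_simp | ring)
  · -- a ≠ d
    exfalso; apply hAB
    have ht : Y 0 0 - Y 1 1 ≠ 0 := sub_ne_zero.2 had
    have hqA : A 0 1 = Y 0 1 * (A 0 0 - A 1 1) / (Y 0 0 - Y 1 1) := by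
      rw [eq_div_iff ht]; linear_combination eA01
    have hrA : A 1 0 = Y 1 0 * (A 0 0 - A 1 1) / (Y 0 0 - Y 1 1) := by
      rw [eq_div_iff ht]; linear_combination -eA10
    have hqB : B 0 1 = Y 0 1 * (B 0 0 - B 1 1) / (Y 0 0 - Y 1 1) := by
      rw [eq_div_iff ht]; linear_combination eB01
    have hrB : B 1 0 = Y 1 0 * (B 0 0 - B 1 1) / (Y 0 0 - Y 1 1) := by
      rw [eq_div_iff ht]; linear_combination -eB10
    ext i j; fin_cases i <;> fin_cases j <;>
      simp only [Matrix.mul_apply, Fin.sum_univ_two, Fin.mk_zero, Fin.mk_one, hqA, hrA, hqB, hrB] <;>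
      (first | (field_simp; ring) | field_simp | ring)

/-- If `M₁,…,Mₙ ∈ GL(2,ℂ)` (`n ≥ 2`) are simultaneously
unitarizable and nondegenerate, then the kernel of
`L : X ↦ (X Mⱼ − (Mⱼ*)⁻¹ X)ⱼ` has complex dimension 1. -/
theorem stmt5 (n : ℕ) (hn : 2 ≤ n) (M : Fin n → Matrix (Fin 2) (Fin 2) ℂ)
    (hM : ∀ j, IsUnit (M j).det)
    (hunit : ∃ C : Matrix (Fin 2) (Fin 2) ℂ, IsUnit C.det ∧
      ∀ j, C * M j * C⁻¹ ∈ Matrix.unitaryGroup (Fin 2) ℂ)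
    (hnd : ∃ i j, i ≠ j ∧ M i * M j ≠ M j * M i)
    (L : Matrix (Fin 2) (Fin 2) ℂ →ₗ[ℂ] (Fin n → Matrix (Fin 2) (Fin 2) ℂ))
    (hL : ∀ X j, L X j = X * M j - ((M j).conjTranspose)⁻¹ * X) :
    Module.finrank ℂ (LinearMap.ker L) = 1 := by
  obtain ⟨C, hC, hU⟩ := hunit
  obtain ⟨i₀, j₀, hij, hcomm⟩ := hnd
  set P : Matrix (Fin 2) (Fin 2) ℂ := Cᴴ * C with hP
  have hCH : IsUnit Cᴴ.det := by rw [det_conjTranspose]; exact hC.star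
  have hPdet : IsUnit P.det := by rw [det_mul]; exact hCH.mul hC
  -- key identity : (M j)ᴴ * P * (M j) = P
  have key : ∀ j, (M j)ᴴ * P * M j = P := by
    intro j
    have h := mem_unitaryGroup_iff'.mp (hU j)  -- star U * U = 1
    have hstar : star (C * M j * C⁻¹) = (Cᴴ)⁻¹ * (M j)ᴴ * Cᴴ := by
      simp [star_eq_conjTranspose, conjTranspose_mul, conjTranspose_nonsing_inv, mul_assoc]
    rw [hstar] at h
    have h2 : Cᴴ * ((Cᴴ)⁻¹ * (M j)ᴴ * Cᴴ * (C * M j * C⁻¹)) * C = Cᴴ * 1 * C := by rw [h]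
    calc (M j)ᴴ * P * M j
        = Cᴴ * ((Cᴴ)⁻¹ * (M j)ᴴ * Cᴴ * (C * M j * C⁻¹)) * C := by
          rw [hP]
          rw [show Cᴴ * ((Cᴴ)⁻¹ * (M j)ᴴ * Cᴴ * (C * M j * C⁻¹)) * C
              = (Cᴴ * (Cᴴ)⁻¹) * (M j)ᴴ * (Cᴴ * C) * (M j) * (C⁻¹ * C) by
            noncomm_ring]
          rw [mul_nonsing_inv _ hCH, nonsing_inv_mul _ hC, one_mul, mul_one]
      _ = P := by rw [h2]; rw [hP]; noncomm_ring
  have key2 : ∀ j, ((M j)ᴴ)⁻¹ * P = P * M j := by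
    intro j
    have hMH : IsUnit ((M j)ᴴ).det := by rw [det_conjTranspose]; exact (hM j).star
    calc ((M j)ᴴ)⁻¹ * P = ((M j)ᴴ)⁻¹ * ((M j)ᴴ * P * M j) := by rw [key j]
      _ = (((M j)ᴴ)⁻¹ * (M j)ᴴ) * (P * M j) := by noncomm_ring
      _ = P * M j := by rw [nonsing_inv_mul _ hMH, one_mul]
  -- kernel = span {P}
  have hker : LinearMap.ker L = Submodule.span ℂ {P} := by
    apply le_antisymm
    · intro X hX
      have hX' : ∀ j, X * M j = ((M j)ᴴ)⁻¹ * X := by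
        intro j
        have := congrFun (LinearMap.mem_ker.mp hX) j
        rw [hL] at this
        exact sub_eq_zero.mp this
      set Z : Matrix (Fin 2) (Fin 2) ℂ := P⁻¹ * X with hZ
      have hXZ : X = P * Z := by
        rw [hZ, ← mul_assoc, mul_nonsing_inv _ hPdet, one_mul]
      have hZcomm : ∀ j, Z * M j = M j * Z := by
        intro j
        have h1 : P * (Z * M j) = P * (M j * Z) := by
          calc P * (Z * M j) = X * M j := by rw [hXZ]; noncomm_ring
            _ = ((M j)ᴴ)⁻¹ * X := hX' j
            _ = ((M j)ᴴ)⁻¹ * P * Z := by rw [hXZ, ← mul_assoc]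
            _ = P * (M j * Z) := by rw [key2 j, mul_assoc]
        have := congrArg (fun W => P⁻¹ * W) h1
        simpa [← mul_assoc, nonsing_inv_mul _ hPdet] using this
      obtain ⟨c, hc⟩ := comm2 (M i₀) (M j₀) Z (hZcomm i₀) (hZcomm j₀) hcomm
      have : X = c • P := by rw [hXZ, hc]; simp
      rw [this]
      exact Submodule.smul_mem _ _ (Submodule.mem_span_singleton_self P)
    · rw [Submodule.span_le, Set.singleton_subset_iff]
      refine LinearMap.mem_ker.mpr ?_
      funext j
      rw [hL]
      rw [← key2 j]
      simp
  rw [hker]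
  rw [finrank_span_singleton]
  intro h0
  rw [h0] at hPdet
  simp [Matrix.det_zero] at hPdet
end

section
/- Let w ∈ (−∞, 1]∖{0} and n = (1 − √(1−w))/2 (so w = 4n(1−n)). If n₁, n₂, n₃ arising this way from w₁, w₂, w₃ satisfy |n₁|+|n₂|+|n₃| ≤ 1, |nᵢ| ≤ |nⱼ|+|nₖ| for all permutations, and |wᵢ| ≤ |wⱼ|+|wₖ| for all permutations, then wₖ > −3 for k = 1, 2, 3. -/
private lemma neck_eq {w n : ℝ} (hw : w ≤ 1) (hn : n = (1 - Real.sqrt (1 - w)) / 2) :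
    w = 4 * n * (1 - n) := by
  have hs : Real.sqrt (1 - w) ^ 2 = 1 - w := Real.sq_sqrt (by linarith)
  subst hn; nlinarith [hs]

private lemma abs_w_le {w n : ℝ} (hw : w ≤ 1) (hn : n = (1 - Real.sqrt (1 - w)) / 2) :
    |w| ≤ 4 * |n| * (1 + |n|) := by
  have h := neck_eq hw hn
  have h1 : |1 - n| ≤ 1 + |n| := (abs_sub _ _).trans (by simp)
  calc |w| = 4 * |n| * |1 - n| := by rw [h, abs_mul, abs_mul]; norm_num
    _ ≤ 4 * |n| * (1 + |n|) := by
        apply mul_le_mul_of_nonneg_left h1; positivity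

private lemma abs_n_pos {w n : ℝ} (hw : w ≤ 1) (hw0 : w ≠ 0)
    (hn : n = (1 - Real.sqrt (1 - w)) / 2) : 0 < |n| := by
  rcases eq_or_ne n 0 with h | h
  · exact absurd (by rw [neck_eq hw hn, h]; ring) hw0
  · exact abs_pos.mpr h

private lemma key (w₁ w₂ w₃ n₁ n₂ n₃ : ℝ)
    (hw₁ : w₁ ≤ 1) (hw₂ : w₂ ≤ 1) (hw₃ : w₃ ≤ 1)
    (hw₂0 : w₂ ≠ 0) (hw₃0 : w₃ ≠ 0)
    (hn₁ : n₁ = (1 - Real.sqrt (1 - w₁)) / 2)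
    (hn₂ : n₂ = (1 - Real.sqrt (1 - w₂)) / 2)
    (hn₃ : n₃ = (1 - Real.sqrt (1 - w₃)) / 2)
    (hsum : |n₁| + |n₂| + |n₃| ≤ 1)
    (hb₁ : |w₁| ≤ |w₂| + |w₃|) : w₁ > -3 := by
  by_contra h
  push_neg at h
  -- w₁ ≤ -3 : then √(1-w₁) ≥ 2, so n₁ ≤ -1/2, |n₁| ≥ 1/2
  have hs : Real.sqrt (1 - w₁) ^ 2 = 1 - w₁ := Real.sq_sqrt (by linarith)
  have hs2 : 2 ≤ Real.sqrt (1 - w₁) := by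
    nlinarith [Real.sqrt_nonneg (1 - w₁)]
  have hn1 : (1:ℝ)/2 ≤ |n₁| := by
    have : n₁ ≤ -(1/2) := by rw [hn₁]; linarith
    calc (1:ℝ)/2 ≤ -n₁ := by linarith
      _ ≤ |n₁| := neg_le_abs n₁
  have hw1abs : 3 ≤ |w₁| := by
    rw [abs_of_nonpos (by linarith)]; linarith
  have ha := abs_n_pos hw₂ hw₂0 hn₂
  have hb := abs_n_pos hw₃ hw₃0 hn₃
  have hab : |n₂| + |n₃| ≤ 1/2 := by linarith
  have h2 := abs_w_le hw₂ hn₂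
  have h3 := abs_w_le hw₃ hn₃
  nlinarith [mul_pos ha hb, sq_nonneg (|n₂| + |n₃|), sq_nonneg (|n₂| - |n₃|)]

/-- If the weights `wₖ ∈ (−∞,1]∖{0}` with necksizes
`nₖ = (1 − √(1−wₖ))/2` satisfy the necksize spherical-triangle inequalities
and the weight balancing inequalities, then `wₖ > −3` for each `k`. -/
theorem stmt15 (w₁ w₂ w₃ n₁ n₂ n₃ : ℝ)
    (hw₁ : w₁ ≤ 1) (hw₂ : w₂ ≤ 1) (hw₃ : w₃ ≤ 1)
    (hw₁0 : w₁ ≠ 0) (hw₂0 : w₂ ≠ 0) (hw₃0 : w₃ ≠ 0)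
    (hn₁ : n₁ = (1 - Real.sqrt (1 - w₁)) / 2)
    (hn₂ : n₂ = (1 - Real.sqrt (1 - w₂)) / 2)
    (hn₃ : n₃ = (1 - Real.sqrt (1 - w₃)) / 2)
    (hsum : |n₁| + |n₂| + |n₃| ≤ 1)
    (ht₁ : |n₁| ≤ |n₂| + |n₃|) (ht₂ : |n₂| ≤ |n₁| + |n₃|)
    (ht₃ : |n₃| ≤ |n₁| + |n₂|)
    (hb₁ : |w₁| ≤ |w₂| + |w₃|) (hb₂ : |w₂| ≤ |w₁| + |w₃|)
    (hb₃ : |w₃| ≤ |w₁| + |w₂|) :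
    w₁ > -3 ∧ w₂ > -3 ∧ w₃ > -3 := by
  refine ⟨key w₁ w₂ w₃ n₁ n₂ n₃ hw₁ hw₂ hw₃ hw₂0 hw₃0 hn₁ hn₂ hn₃ hsum hb₁,
    key w₂ w₁ w₃ n₂ n₁ n₃ hw₂ hw₁ hw₃ hw₁0 hw₃0 hn₂ hn₁ hn₃ (by linarith) hb₂,
    key w₃ w₁ w₂ n₃ n₁ n₂ hw₃ hw₁ hw₂ hw₁0 hw₂0 hn₃ hn₁ hn₂ (by linarith) hb₃⟩
end
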